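/- Let T be a string of length n ≥ 0 over a finite alphabet A, and let T⁺ be the string of length n+1 obtained by inserting one character into T at an arbitrary position. Then |n·H₀(T) − (n+1)·H₀(T⁺)| ≤ 4 log₂(n+1) + 4 log₂ |A|. -/

import Mathlib

open Finset

noncomputable def H0 {A : Type*} [Fintype A] [DecidableEq A] (T : List A) : ℝ :=
  -∑ c : A, ((T.count c : ℝ) / T.length) * Real.logb 2 ((T.count c : ℝ) / T.length)

open Real

/-! Writing `n = |T|` and `m_a` for the number of occurrences of `a`, one has
`n H₀(T) = n log n - ∑ₐ m_a log m_a`. Inserting `c` only changes the terms for `n` and `m_c`,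
each by an increment `(k+1) log (k+1) - k log k`, which lies between `log (k+1)` and
`log (k+1) + log e`. As `m_c ≤ n`, the two increments differ by at most `log (n+1) + log e`. -/

section MulLogb

variable {b x y : ℝ}

theorem logb_add_one_le_mul_logb_add_one_sub (hb : 1 < b) (hx : 0 ≤ x) :
    logb b (x + 1) ≤ (x + 1) * logb b (x + 1) - x * logb b x := by
  have : x * logb b x ≤ x * logb b (x + 1) := by
    rcases hx.eq_or_lt with rfl | hx
    · simp
    · exact mul_le_mul_of_nonneg_left (logb_le_logb_of_le hb hx (by linarith)) hx.le
  linarith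

theorem mul_logb_add_one_sub_le (hb : 1 < b) (hx : 0 ≤ x) :
    (x + 1) * logb b (x + 1) - x * logb b x ≤ logb b (x + 1) + 1 / log b := by
  have hlogb : 0 < log b := log_pos hb
  rcases hx.eq_or_lt with rfl | hx
  · simp only [zero_add, zero_mul, sub_zero, one_mul, le_add_iff_nonneg_right]
    positivity
  have hgap : x * (log (x + 1) - log x) ≤ 1 := by
    have h := log_le_sub_one_of_pos (show 0 < (x + 1) / x by positivity)
    rw [log_div (by positivity) hx.ne'] at h
    calc x * (log (x + 1) - log x) ≤ x * ((x + 1) / x - 1) := by gcongr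
      _ = 1 := by field_simp; ring
  calc (x + 1) * logb b (x + 1) - x * logb b x
      = logb b (x + 1) + x * (log (x + 1) - log x) / log b := by simp only [logb]; ring
    _ ≤ logb b (x + 1) + 1 / log b := by gcongr

theorem abs_mul_logb_add_one_sub_sub_le (hb : 1 < b) (hx : 0 ≤ x) (hxy : x ≤ y) :
    |((x + 1) * logb b (x + 1) - x * logb b x) - ((y + 1) * logb b (y + 1) - y * logb b y)| ≤
      logb b (y + 1) + 1 / log b := by
  have hlogx : 0 ≤ logb b (x + 1) := logb_nonneg hb (by linarith)
  have hlogxy : logb b (x + 1) ≤ logb b (y + 1) := logb_le_logb_of_le hb (by linarith) (by linarith)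
  have hy : 0 ≤ y := hx.trans hxy
  rw [abs_le]
  constructor <;>
    linarith [logb_add_one_le_mul_logb_add_one_sub hb hx, mul_logb_add_one_sub_le hb hx,
      logb_add_one_le_mul_logb_add_one_sub hb hy, mul_logb_add_one_sub_le hb hy]

end MulLogb

section Entropy

variable {A : Type*} [Fintype A] [DecidableEq A]

theorem sum_count_eq_length (T : List A) : ∑ c : A, T.count c = T.length := by
  simpa using Multiset.sum_count_eq_card (s := univ) (m := (T : Multiset A)) (by simp)

theorem length_mul_H0 (T : List A) :
    T.length * H0 T =
      T.length * logb 2 T.length - ∑ c : A, (T.count c : ℝ) * logb 2 (T.count c) := by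
  rcases eq_or_ne T [] with rfl | hT
  · simp
  have hn : (T.length : ℝ) ≠ 0 := by simpa using hT
  have hterm (c : A) : (T.length : ℝ) * ((T.count c / T.length) * logb 2 (T.count c / T.length))
      = T.count c * logb 2 (T.count c) - T.count c * logb 2 T.length := by
    rcases eq_or_ne (T.count c) 0 with hc | hc
    · simp [hc]
    · rw [logb_div (by exact_mod_cast hc) hn]
      field_simp
  have hsum : ∑ c : A, (T.count c : ℝ) = T.length := by exact_mod_cast sum_count_eq_length T
  rw [H0, mul_neg, mul_sum, sum_congr rfl fun c _ => hterm c, sum_sub_distrib, ← sum_mul, hsum]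
  ring

theorem H0_perm {T T' : List A} (h : T.Perm T') : H0 T = H0 T' := by
  simp only [H0, h.length_eq, h.count_eq]

theorem length_mul_H0_sub_cons (T : List A) (c : A) :
    T.length * H0 T - (T.length + 1) * H0 (c :: T) =
      (((T.count c : ℝ) + 1) * logb 2 (T.count c + 1) - T.count c * logb 2 (T.count c)) -
        (((T.length : ℝ) + 1) * logb 2 (T.length + 1) - T.length * logb 2 T.length) := by
  have hsum : ∑ x : A, ((c :: T).count x : ℝ) * logb 2 ((c :: T).count x) -
      ∑ x : A, (T.count x : ℝ) * logb 2 (T.count x) =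
      ((T.count c : ℝ) + 1) * logb 2 (T.count c + 1) - T.count c * logb 2 (T.count c) := by
    rw [← sum_sub_distrib, sum_eq_single c]
    · simp
    · intro x _ hx
      simp [Ne.symm hx]
    · simp
  have h := length_mul_H0 (c :: T)
  rw [List.length_cons, Nat.cast_succ] at h
  rw [h, length_mul_H0]
  linarith

end Entropy

theorem stmt2 {A : Type*} [Fintype A] [DecidableEq A]
    (T T₁ T₂ : List A) (c : A)
    (hT : T = T₁ ++ T₂) :
    |(T.length : ℝ) * H0 T - ((T.length : ℝ) + 1) * H0 (T₁ ++ c :: T₂)| ≤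
      4 * Real.logb 2 (T.length + 1) + 4 * Real.logb 2 (Fintype.card A) := by
  have hperm : (T₁ ++ c :: T₂).Perm (c :: T) := hT ▸ List.perm_middle
  rw [H0_perm hperm, length_mul_H0_sub_cons]
  have hmn : T.count c ≤ T.length := List.count_le_length
  set m := T.count c
  set n := T.length
  have hA : 0 ≤ logb 2 (Fintype.card A) :=
    logb_nonneg one_lt_two (by exact_mod_cast Fintype.card_pos_iff.mpr ⟨c⟩)
  rcases Nat.eq_zero_or_pos n with hn | hn
  · have hm : m = 0 := by omega
    simp [hm, hn, hA]
  have hlog2 : 1 / log 2 ≤ 2 := by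
    rw [div_le_iff₀ (log_pos one_lt_two)]
    linarith [log_two_gt_d9]
  have hlogn : 1 ≤ logb 2 ((n : ℝ) + 1) := by
    rw [le_logb_iff_rpow_le one_lt_two (by positivity)]
    have : (1 : ℝ) ≤ n := by exact_mod_cast hn
    linarith
  calc _ ≤ logb 2 ((n : ℝ) + 1) + 1 / log 2 :=
        abs_mul_logb_add_one_sub_sub_le one_lt_two m.cast_nonneg (by exact_mod_cast hmn)
    _ ≤ 4 * logb 2 ((n : ℝ) + 1) + 4 * logb 2 (Fintype.card A) := by linarith
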